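/- For every d ≥ 1 there exists a d-dimensional lattice simplex T' ⊂ ℝ^d with exactly one interior lattice point whose barycentric coordinates β₀ ≥ β₁ ≥ … ≥ β_d > 0 (of the interior point) satisfy β_i ≤ 1/(2^{2^{i−1}} − 1) for every i ∈ {0,…,d}. -/

import Mathlib

/-!
Let `t₁ = 2, t₂ = 3, t₃ = 7, …` be Sylvester's sequence and take the simplex with vertices
`t₁e₁, …, t_de_d` and `0`. The point `(1, …, 1)` has barycentric coordinates `1/t_i`, and the
last one is `1 - ∑ 1/t_i = 1/(t_{d+1} - 1)` because the sum telescopes. Any other lattice point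
with positive barycentric coordinates `x_i/t_i` has some `x_k ≥ 2`, which adds at least
`1/t_k ≥ 1/(t_{d+1} - 1)` to the sum and so makes the last coordinate nonpositive. The bounds
come from `t_{n+1} - 1 = t_n (t_n - 1) ≥ (t_n - 1)²`, giving `t_{n+1} > 2^{2^{n-1}}`.
-/

open Finset

section CornerSimplex

variable {d : ℕ} {R : Type*} [Zero R]

def cornerSimplex (a : Fin d → R) : Fin (d + 1) → Fin d → R :=
  Fin.snoc (α := fun _ => Fin d → R) (fun i => Pi.single i (a i)) 0

@[simp]
lemma cornerSimplex_castSucc (a : Fin d → R) (i : Fin d) :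
    cornerSimplex a i.castSucc = Pi.single i (a i) :=
  Fin.snoc_castSucc ..

@[simp]
lemma cornerSimplex_last (a : Fin d → R) : cornerSimplex a (Fin.last d) = 0 :=
  Fin.snoc_last ..

lemma intCast_cornerSimplex_apply (a : Fin d → ℤ) (i : Fin (d + 1)) (j : Fin d) :
    ((cornerSimplex a i j : ℤ) : ℝ) = cornerSimplex (fun j => (a j : ℝ)) i j := by
  induction i using Fin.lastCases with
  | last => simp
  | cast i => by_cases h : j = i <;> simp [h]

variable {k : Type*} [Field k] {a : Fin d → k}

lemma affineIndependent_cornerSimplex (ha : ∀ j, a j ≠ 0) :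
    AffineIndependent k (cornerSimplex a) := by
  rw [affineIndependent_iff_linearIndependent_vsub k _ (Fin.last d),
    ← linearIndependent_equiv (finSuccAboveEquiv (Fin.last d))]
  simpa [Function.comp_def, finSuccAboveEquiv_apply] using
    Pi.linearIndependent_single_of_ne_zero (R := k) ha

def cornerSimplexBasis (ha : ∀ j, a j ≠ 0) : AffineBasis (Fin (d + 1)) k (Fin d → k) :=
  ⟨cornerSimplex a, affineIndependent_cornerSimplex ha, by
    rw [(affineIndependent_cornerSimplex ha).affineSpan_eq_top_iff_card_eq_finrank_add_one]
    simp⟩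

def cornerSimplexCoords (a x : Fin d → k) : Fin (d + 1) → k :=
  Fin.snoc (α := fun _ => k) (fun i => x i / a i) (1 - ∑ j, x j / a j)

lemma sum_cornerSimplexCoords (x : Fin d → k) : ∑ i, cornerSimplexCoords a x i = 1 := by
  simp [cornerSimplexCoords, Fin.sum_univ_castSucc]

lemma sum_cornerSimplexCoords_smul (ha : ∀ j, a j ≠ 0) (x : Fin d → k) :
    ∑ i, cornerSimplexCoords a x i • cornerSimplex a i = x := by
  ext j
  simp [cornerSimplexCoords, Fin.sum_univ_castSucc, Pi.single_apply, ha j]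

lemma cornerSimplexBasis_coord (ha : ∀ j, a j ≠ 0) (x : Fin d → k) (i : Fin (d + 1)) :
    (cornerSimplexBasis ha).coord i x = cornerSimplexCoords a x i := by
  have hx : x = univ.affineCombination k (cornerSimplex a) (cornerSimplexCoords a x) := by
    rw [univ.affineCombination_eq_linear_combination _ _ (sum_cornerSimplexCoords x),
      sum_cornerSimplexCoords_smul ha]
  conv_lhs => rw [hx]
  exact (cornerSimplexBasis ha).coord_apply_combination_of_mem (mem_univ i)
    (sum_cornerSimplexCoords x)

lemma mem_interior_convexHull_cornerSimplex_iff {a : Fin d → ℝ} (ha : ∀ j, a j ≠ 0)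
    (x : Fin d → ℝ) :
    x ∈ interior (convexHull ℝ (Set.range (cornerSimplex a))) ↔
      ∀ i, 0 < cornerSimplexCoords a x i := by
  rw [show Set.range (cornerSimplex a) = Set.range (cornerSimplexBasis ha) from rfl,
    AffineBasis.interior_convexHull]
  simp [cornerSimplexBasis_coord]

end CornerSimplex

/-- `sylvester n` is the paper's `t_{n+1}`: `2, 3, 7, 43, …`. -/
def sylvester : ℕ → ℕ
  | 0 => 2
  | n + 1 => sylvester n * (sylvester n - 1) + 1

lemma two_le_sylvester (n : ℕ) : 2 ≤ sylvester n := by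
  induction n with
  | zero => rfl
  | succ n ih =>
    have : 2 * 1 ≤ sylvester n * (sylvester n - 1) := Nat.mul_le_mul ih (by omega)
    simp only [sylvester]
    omega

lemma sylvester_strictMono : StrictMono sylvester := by
  refine strictMono_nat_of_lt_succ fun n => ?_
  have h := two_le_sylvester n
  have : sylvester n * 1 ≤ sylvester n * (sylvester n - 1) := Nat.mul_le_mul_left _ (by omega)
  simp only [sylvester]
  omega

lemma cast_sylvester_succ_sub_one (n : ℕ) :
    (sylvester (n + 1) : ℝ) - 1 = sylvester n * (sylvester n - 1) := by
  rw [sylvester, Nat.cast_add_one, Nat.cast_mul, Nat.cast_sub (by linarith [two_le_sylvester n]),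
    Nat.cast_one, add_sub_cancel_right]

lemma two_le_cast_sylvester (n : ℕ) : (2 : ℝ) ≤ sylvester n := by
  exact_mod_cast two_le_sylvester n

lemma cast_sylvester_pos (n : ℕ) : (0 : ℝ) < sylvester n :=
  zero_lt_two.trans_le (two_le_cast_sylvester n)

lemma sum_range_one_div_sylvester (n : ℕ) :
    ∑ j ∈ range n, (1 : ℝ) / sylvester j = 1 - 1 / (sylvester n - 1) := by
  induction n with
  | zero => norm_num [sylvester]
  | succ n ih =>
    have h := two_le_cast_sylvester n
    rw [sum_range_succ, ih, cast_sylvester_succ_sub_one]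
    field_simp [show (sylvester n : ℝ) - 1 ≠ 0 by linarith]
    ring

lemma two_pow_two_pow_lt_sylvester_succ (n : ℕ) : 2 ^ 2 ^ n < sylvester (n + 1) := by
  induction n with
  | zero => decide
  | succ n ih =>
    calc 2 ^ 2 ^ (n + 1) = 2 ^ 2 ^ n * 2 ^ 2 ^ n := by rw [pow_succ, pow_mul, sq]
      _ ≤ sylvester (n + 1) * (sylvester (n + 1) - 1) := Nat.mul_le_mul (by omega) (by omega)
      _ < sylvester (n + 2) := Nat.lt_succ_self _

lemma two_rpow_two_rpow_le_sylvester (n : ℕ) :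
    (2 : ℝ) ^ (2 : ℝ) ^ ((n : ℝ) - 1) ≤ sylvester n := by
  cases n with
  | zero =>
    calc (2 : ℝ) ^ (2 : ℝ) ^ ((0 : ℕ) - 1 : ℝ) ≤ 2 ^ (1 : ℝ) := by
          apply Real.rpow_le_rpow_of_exponent_le one_le_two
          norm_num
      _ = sylvester 0 := by norm_num [sylvester]
  | succ n =>
    rw [Nat.cast_add_one, add_sub_cancel_right, Real.rpow_natCast, ← Nat.cast_ofNat,
      ← Nat.cast_pow, Real.rpow_natCast, ← Nat.cast_pow]
    exact_mod_cast (two_pow_two_pow_lt_sylvester_succ n).le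

section SylvesterSimplex

variable {d : ℕ}

noncomputable def sylvesterWeights (d : ℕ) : Fin (d + 1) → ℝ :=
  cornerSimplexCoords (fun j : Fin d => (sylvester j : ℝ)) 1

lemma sylvesterWeights_castSucc (i : Fin d) : sylvesterWeights d i.castSucc = 1 / sylvester i := by
  simp [sylvesterWeights, cornerSimplexCoords]

lemma sum_one_div_sylvester :
    ∑ j : Fin d, (1 : ℝ) / sylvester j = 1 - 1 / (sylvester d - 1) :=
  (Fin.sum_univ_eq_sum_range (fun j => (1 : ℝ) / sylvester j) d).trans
    (sum_range_one_div_sylvester d)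

lemma sylvesterWeights_last : sylvesterWeights d (Fin.last d) = 1 / (sylvester d - 1) := by
  simp only [sylvesterWeights, cornerSimplexCoords, Fin.snoc_last, Pi.one_apply,
    sum_one_div_sylvester]
  ring

lemma one_div_cast_sylvester_sub_one_le {i : ℕ} (hi : i < d) :
    1 / ((sylvester d : ℝ) - 1) ≤ 1 / sylvester i := by
  have : (sylvester i : ℝ) + 1 ≤ sylvester d := by exact_mod_cast sylvester_strictMono hi
  exact one_div_le_one_div_of_le (cast_sylvester_pos i) (by linarith)

lemma sylvesterWeights_pos (i : Fin (d + 1)) : 0 < sylvesterWeights d i := by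
  induction i using Fin.lastCases with
  | last =>
    rw [sylvesterWeights_last]
    exact one_div_pos.2 (by linarith [two_le_cast_sylvester d])
  | cast i =>
    rw [sylvesterWeights_castSucc]
    exact one_div_pos.2 (cast_sylvester_pos i)

lemma antitone_sylvesterWeights : Antitone (sylvesterWeights d) := by
  intro i j hij
  induction j using Fin.lastCases with
  | last =>
    induction i using Fin.lastCases with
    | last => exact le_rfl
    | cast i =>
      rw [sylvesterWeights_castSucc, sylvesterWeights_last]
      exact one_div_cast_sylvester_sub_one_le i.isLt
  | cast j =>
    induction i using Fin.lastCases with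
    | last => exact absurd hij (Fin.castSucc_lt_last j).not_ge
    | cast i =>
      rw [sylvesterWeights_castSucc, sylvesterWeights_castSucc]
      have : (sylvester i : ℝ) ≤ sylvester j := by
        exact_mod_cast sylvester_strictMono.monotone (Fin.castSucc_le_castSucc_iff.1 hij)
      exact one_div_le_one_div_of_le (cast_sylvester_pos i) this

lemma sylvesterWeights_le (i : Fin (d + 1)) : sylvesterWeights d i ≤ 1 / (sylvester i - 1) := by
  induction i using Fin.lastCases with
  | last => exact sylvesterWeights_last.le
  | cast i =>
    rw [sylvesterWeights_castSucc, Fin.val_castSucc]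
    exact one_div_le_one_div_of_le (by linarith [two_le_cast_sylvester i]) (by simp)

lemma eq_one_of_cornerSimplexCoords_sylvester_pos {q : Fin d → ℤ}
    (h : ∀ i, 0 < cornerSimplexCoords (fun j => (sylvester j : ℝ)) (fun j => (q j : ℝ)) i) :
    q = 1 := by
  set s : Fin d → ℝ := fun j => sylvester j
  have hs : ∀ j, 0 < s j := fun j => cast_sylvester_pos j
  obtain ⟨hpos, hlast⟩ := Fin.forall_fin_succ'.1 h
  simp only [cornerSimplexCoords, Fin.snoc_castSucc, Fin.snoc_last, sub_pos] at hpos hlast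
  have hq : ∀ j, (1 : ℝ) ≤ q j := fun j => by
    have : 0 < q j := by exact_mod_cast (div_pos_iff_of_pos_right (hs j)).1 (hpos j)
    exact_mod_cast this
  by_contra hne
  obtain ⟨k, hk1⟩ := Function.ne_iff.1 hne
  rw [Pi.one_apply] at hk1
  have hk : (2 : ℝ) ≤ q k := by
    have : 2 ≤ q k := by have := hq k; norm_cast at this; omega
    exact_mod_cast this
  have hsum : 1 - 1 / (sylvester d - 1) + 1 / s k ≤ ∑ j, (q j : ℝ) / s j :=
    calc 1 - 1 / (sylvester d - 1) + 1 / s k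
        ≤ ∑ j, 1 / s j + (q k - 1) / s k := by
          rw [sum_one_div_sylvester]
          gcongr
          linarith
      _ ≤ ∑ j, 1 / s j + ∑ j, (q j - 1) / s j := by
          gcongr
          exact single_le_sum (f := fun j => ((q j : ℝ) - 1) / s j)
            (fun j _ => div_nonneg (by linarith [hq j]) (hs j).le) (mem_univ k)
      _ = ∑ j, (q j : ℝ) / s j := by
          rw [← sum_add_distrib]
          exact sum_congr rfl fun j _ => by ring
  linarith [one_div_cast_sylvester_sub_one_le k.isLt]

end SylvesterSimplex

theorem stmt16_general (d : ℕ) :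
    ∃ (v : Fin (d + 1) → Fin d → ℤ) (q : Fin d → ℤ) (β : Fin (d + 1) → ℝ),
      AffineIndependent ℝ (fun i => fun j => ((v i j : ℤ) : ℝ)) ∧
      (fun j => ((q j : ℤ) : ℝ)) ∈
        interior (convexHull ℝ (Set.range (fun i => fun j => ((v i j : ℤ) : ℝ)))) ∧
      (∀ q' : Fin d → ℤ,
        (fun j => ((q' j : ℤ) : ℝ)) ∈
          interior (convexHull ℝ (Set.range (fun i => fun j => ((v i j : ℤ) : ℝ)))) →
            q' = q) ∧
      (∑ i, β i = 1) ∧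
      ((∑ i, β i • (fun j => ((v i j : ℤ) : ℝ))) = fun j => ((q j : ℤ) : ℝ)) ∧
      (∀ i j : Fin (d + 1), i ≤ j → β j ≤ β i) ∧
      (∀ i, 0 < β i) ∧
      ∀ i : Fin (d + 1),
        β i ≤ 1 / ((2 : ℝ) ^ ((2 : ℝ) ^ (((i : ℕ) : ℝ) - 1)) - 1) := by
  have ha : ∀ j : Fin d, (sylvester j : ℝ) ≠ 0 := fun j => (cast_sylvester_pos j).ne'
  have hone : (fun j => (((1 : Fin d → ℤ) j : ℤ) : ℝ)) = 1 := by ext; simp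
  refine ⟨cornerSimplex fun j => (sylvester j : ℤ), 1, sylvesterWeights d, ?_⟩
  simp only [intCast_cornerSimplex_apply, Int.cast_natCast,
    mem_interior_convexHull_cornerSimplex_iff ha, hone]
  refine ⟨affineIndependent_cornerSimplex ha, sylvesterWeights_pos,
    fun q' hq' => eq_one_of_cornerSimplexCoords_sylvester_pos hq', sum_cornerSimplexCoords 1,
    sum_cornerSimplexCoords_smul ha 1, fun i j hij => antitone_sylvesterWeights hij,
    sylvesterWeights_pos, fun i => ?_⟩
  have hpos : 0 < (2 : ℝ) ^ (2 : ℝ) ^ ((i : ℕ) - 1 : ℝ) - 1 :=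
    sub_pos.2 (Real.one_lt_rpow one_lt_two (by positivity))
  calc sylvesterWeights d i ≤ 1 / (sylvester i - 1) := sylvesterWeights_le i
    _ ≤ _ := one_div_le_one_div_of_le hpos (by linarith [two_rpow_two_rpow_le_sylvester i])

/-- Theorem 3.II: for every `d ≥ 1` there is a lattice `d`-simplex with exactly one
interior lattice point whose ordered barycentric coordinates `β₀ ≥ ⋯ ≥ β_d > 0`
satisfy `β_i ≤ 1/(2^{2^{i-1}} - 1)`. -/
theorem stmt16 (d : ℕ) (hd : 0 < d) :
    ∃ (v : Fin (d + 1) → Fin d → ℤ) (q : Fin d → ℤ) (β : Fin (d + 1) → ℝ),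
      AffineIndependent ℝ (fun i => fun j => ((v i j : ℤ) : ℝ)) ∧
      (fun j => ((q j : ℤ) : ℝ)) ∈
        interior (convexHull ℝ (Set.range (fun i => fun j => ((v i j : ℤ) : ℝ)))) ∧
      (∀ q' : Fin d → ℤ,
        (fun j => ((q' j : ℤ) : ℝ)) ∈
          interior (convexHull ℝ (Set.range (fun i => fun j => ((v i j : ℤ) : ℝ)))) →
            q' = q) ∧
      (∑ i, β i = 1) ∧
      ((∑ i, β i • (fun j => ((v i j : ℤ) : ℝ))) = fun j => ((q j : ℤ) : ℝ)) ∧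
      (∀ i j : Fin (d + 1), i ≤ j → β j ≤ β i) ∧
      (∀ i, 0 < β i) ∧
      ∀ i : Fin (d + 1),
        β i ≤ 1 / ((2 : ℝ) ^ ((2 : ℝ) ^ (((i : ℕ) : ℝ) - 1)) - 1) :=
  stmt16_general d
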